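/- arXiv:2308.15189 — 2 statements merged into one kernel-verified Lean document; each statement's English description precedes it below -/
import Mathlib

section
/- Let β > 1, let k ≥ 1 be an integer, and let δ > 0 satisfy (β + δ)^{2k} < 1 + β^{2k}. Let y ∈ X_{β+δ} and let x : {1,2,…} → ℕ satisfy x_n ≤ y_n for all n. Suppose that for some integer i ≥ 0 there exists s₀ ∈ {i+1, …, i+2k} with x_{s₀} = 0 and y_{s₀} ≥ 1. Then ∑_{s=1}^{2k} x_{s+i} β^{−s} < ((β + δ)/β)^{2k} − β^{−2k} < 1. -/
/-- The β-shift: `x n` represents the `(n+1)`-st term of the sequence `x_1 x_2 x_3 …`, so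
this encodes: for all integers `0 ≤ i < j`, `∑_{s=1}^{j-i} x_{s+i} β^{-s} < 1`. -/
def betaShift (β : ℝ) : Set (ℕ → ℕ) :=
  {x | ∀ i j : ℕ, i < j →
    (∑ s ∈ Finset.range (j - i), (x (i + s) : ℝ) / β ^ (s + 1)) < 1}

theorem stmt2 (β δ : ℝ) (k : ℕ) (hβ : 1 < β) (hk : 1 ≤ k) (hδ0 : 0 < δ)
    (hpow : (β + δ) ^ (2 * k) < 1 + β ^ (2 * k))
    (y : ℕ → ℕ) (hy : y ∈ betaShift (β + δ))
    (x : ℕ → ℕ) (hxy : ∀ n, x n ≤ y n) (i : ℕ)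
    (hs : ∃ s₀ : ℕ, i ≤ s₀ ∧ s₀ < i + 2 * k ∧ x s₀ = 0 ∧ 1 ≤ y s₀) :
    (∑ s ∈ Finset.range (2 * k), (x (i + s) : ℝ) / β ^ (s + 1))
        < ((β + δ) / β) ^ (2 * k) - (β ^ (2 * k))⁻¹ ∧
      ((β + δ) / β) ^ (2 * k) - (β ^ (2 * k))⁻¹ < 1 := by
  obtain ⟨s₀, h1, h2, hx0, hy1⟩ := hs
  have hβ0 : (0:ℝ) < β := lt_trans one_pos hβ
  have hβδ0 : (0:ℝ) < β + δ := by linarith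
  have hb : (0:ℝ) < β ^ (2*k) := by positivity
  have hr1 : 1 < (β + δ) / β := by rw [lt_div_iff₀ hβ0]; linarith
  have hr0 : (0:ℝ) < ((β+δ)/β)^(2*k) := by positivity
  set t := s₀ - i with htdef
  have hs₀ : s₀ = i + t := by omega
  have htk : t < 2 * k := by omega
  have hx0' : x (i + t) = 0 := by rw [← hs₀]; exact hx0
  have hy1' : 1 ≤ y (i + t) := by rw [← hs₀]; exact hy1
  have h2nd : ((β + δ) / β) ^ (2 * k) - (β ^ (2 * k))⁻¹ < 1 := by
    rw [sub_lt_iff_lt_add, div_pow, div_lt_iff₀ hb, add_mul, one_mul,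
      inv_mul_cancel₀ hb.ne']
    linarith
  refine ⟨?_, h2nd⟩
  have hysum : ∑ s ∈ Finset.range (2*k), (y (i+s):ℝ)/(β+δ)^(s+1) < 1 := by
    have := hy i (i + 2*k) (by omega)
    simpa using this
  have step1 : ∑ s ∈ Finset.range (2*k), (x (i+s):ℝ)/β^(s+1) + (β^(2*k))⁻¹
      ≤ ∑ s ∈ Finset.range (2*k), (y (i+s):ℝ)/β^(s+1) := by
    have hrw : (β^(2*k))⁻¹ =
        ∑ s ∈ Finset.range (2*k), (if s = t then (β^(2*k))⁻¹ else 0) := by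
      rw [Finset.sum_ite_eq' (Finset.range (2*k)) t, if_pos (Finset.mem_range.2 htk)]
    rw [hrw, ← Finset.sum_add_distrib]
    apply Finset.sum_le_sum
    intro s hsr
    rw [Finset.mem_range] at hsr
    by_cases h : s = t
    · rw [if_pos h, h, hx0']
      simp only [Nat.cast_zero, zero_div, zero_add]
      have h1y : (1:ℝ) ≤ (y (i+t) : ℝ) := by exact_mod_cast hy1'
      have hle : (β^(2*k))⁻¹ ≤ (β^(t+1))⁻¹ := by
        apply inv_anti₀ (by positivity)
        exact pow_le_pow_right₀ hβ.le (by omega)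
      calc (β^(2*k))⁻¹ ≤ (β^(t+1))⁻¹ := hle
        _ = 1 / β^(t+1) := (one_div _).symm
        _ ≤ (y (i+t):ℝ)/β^(t+1) := by gcongr
    · rw [if_neg h, add_zero]
      gcongr
      exact_mod_cast hxy (i+s)
  have step2 : ∑ s ∈ Finset.range (2*k), (y (i+s):ℝ)/β^(s+1)
      ≤ ((β+δ)/β)^(2*k) * ∑ s ∈ Finset.range (2*k), (y (i+s):ℝ)/(β+δ)^(s+1) := by
    rw [Finset.mul_sum]
    apply Finset.sum_le_sum
    intro s hsr
    rw [Finset.mem_range] at hsr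
    have hkey : (β+δ)^(s+1) ≤ ((β+δ)/β)^(2*k) * β^(s+1) := by
      have he : ((β+δ)/β)^(s+1) * β^(s+1) = (β+δ)^(s+1) := by
        rw [div_pow, div_mul_cancel₀]
        positivity
      calc (β+δ)^(s+1) = ((β+δ)/β)^(s+1) * β^(s+1) := he.symm
        _ ≤ ((β+δ)/β)^(2*k) * β^(s+1) := by
            apply mul_le_mul_of_nonneg_right _ (by positivity)
            exact pow_le_pow_right₀ hr1.le (by omega)
    rw [← mul_div_assoc, div_le_div_iff₀ (by positivity) (by positivity)]
    have hy0 : (0:ℝ) ≤ (y (i+s):ℝ) := Nat.cast_nonneg _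
    nlinarith [mul_le_mul_of_nonneg_left hkey hy0]
  have step3 : ((β+δ)/β)^(2*k) * ∑ s ∈ Finset.range (2*k), (y (i+s):ℝ)/(β+δ)^(s+1)
      < ((β+δ)/β)^(2*k) * 1 := by
    exact mul_lt_mul_of_pos_left hysum hr0
  linarith
end

section
/- Let k ≥ 2 and j ≥ 1 be integers and let n be a positive multiple of k. The number of pairs (T, c), where T ⊆ {1, …, n} is a set such that any two distinct elements s, t ∈ T satisfy |s − t| > k, and c : T → {1, …, j} is any function, is at most j^{n/k} · (2n/k) · C(n, n/k). -/
/-!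
A set whose distinct elements are at least `k` apart meets each of the `n / k` blocks
`{ik + 1, …, (i + 1)k}` at most once, so it has at most `n / k` elements. The sum is therefore at
most `j ^ (n / k)` times the number of subsets of `{1, …, n}` of size at most `n / k`, and since
`i ↦ C(n, i)` increases up to `n / 2 ≥ n / k`, there are at most `(n / k + 1) · C(n, n / k)` of those.
-/

open Finset

theorem Nat.choose_le_choose_of_le_of_le_half {n i r : ℕ} (hir : i ≤ r) (hr : r ≤ n / 2) :
    n.choose i ≤ n.choose r := by
  induction r, hir using Nat.le_induction with
  | base => rfl
  | succ r _ ih => exact (ih (by omega)).trans (Nat.choose_le_succ_of_lt_half_left (by omega))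

theorem Finset.card_filter_card_le_le {α : Type*} (s : Finset α) {q : ℕ} (hq : q ≤ #s / 2) :
    #(s.powerset.filter (#· ≤ q)) ≤ (q + 1) * (#s).choose q := by
  classical
  have hcover : s.powerset.filter (#· ≤ q) ⊆ (range (q + 1)).biUnion (s.powersetCard ·) := by
    intro T hT
    simp only [mem_filter, mem_powerset] at hT
    simp only [mem_biUnion, mem_range, mem_powersetCard]
    exact ⟨#T, by omega, hT.1, rfl⟩
  calc #(s.powerset.filter (#· ≤ q))
      ≤ ∑ i ∈ range (q + 1), #(s.powersetCard i) := (card_le_card hcover).trans card_biUnion_le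
    _ ≤ ∑ _i ∈ range (q + 1), (#s).choose q := by
        refine sum_le_sum fun i hi => ?_
        rw [card_powersetCard]
        exact Nat.choose_le_choose_of_le_of_le_half (by simpa [Nat.lt_succ_iff] using hi) hq
    _ = (q + 1) * (#s).choose q := by simp

theorem Nat.abs_sub_lt_of_div_eq {a b k : ℕ} (hk : 0 < k) (h : a / k = b / k) :
    |(a : ℤ) - b| < k := by
  have ha := Nat.div_add_mod a k
  have hb := Nat.div_add_mod b k
  have := Nat.mod_lt a hk
  have := Nat.mod_lt b hk
  rw [h] at ha
  rw [abs_lt]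
  constructor <;> omega

theorem card_le_of_subset_Icc_of_le_abs_sub {k q : ℕ} {T : Finset ℕ} (hT : T ⊆ Icc 1 (k * q))
    (hsep : ∀ s ∈ T, ∀ t ∈ T, s ≠ t → (k : ℤ) ≤ |(s : ℤ) - t|) : #T ≤ q := by
  rcases k.eq_zero_or_pos with rfl | hk
  · simp_all
  calc #T ≤ #(range q) := by
        refine card_le_card_of_injOn (fun t => (t - 1) / k) (fun t ht => ?_) fun s hs t ht hst => ?_
        · have ht1 := mem_Icc.mp (hT ht)
          exact mem_range.mpr (Nat.div_lt_of_lt_mul (by omega))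
        · by_contra hne
          have hs1 := (mem_Icc.mp (hT hs)).1
          have ht1 := (mem_Icc.mp (hT ht)).1
          have hshift : ((s - 1 : ℕ) : ℤ) - (t - 1 : ℕ) = s - t := by omega
          have := Nat.abs_sub_lt_of_div_eq hk hst
          rw [hshift] at this
          exact (hsep s hs t ht hne).not_gt this
    _ = q := card_range q

open Classical in
/-- The number of pairs `(T, c)` with `c : T → {1, …, j}` equals `∑_T j ^ |T|`. -/
theorem stmt6 (k j n : ℕ) (hk : 2 ≤ k) (hj : 1 ≤ j) (hn : 0 < n) (hkn : k ∣ n) :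
    (∑ T ∈ (Finset.Icc 1 n).powerset.filter
        (fun T : Finset ℕ => ∀ s ∈ T, ∀ t ∈ T, s ≠ t → (k : ℤ) < |(s : ℤ) - (t : ℤ)|),
      j ^ T.card)
      ≤ j ^ (n / k) * (2 * (n / k)) * n.choose (n / k) := by
  set S := (Finset.Icc 1 n).powerset.filter
    (fun T : Finset ℕ => ∀ s ∈ T, ∀ t ∈ T, s ≠ t → (k : ℤ) < |(s : ℤ) - (t : ℤ)|)
  set q := n / k
  have hnq : n = k * q := (Nat.mul_div_cancel' hkn).symm
  have hq : 1 ≤ q := Nat.div_pos (Nat.le_of_dvd hn hkn) (by omega)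
  have hS : S ⊆ (Icc 1 n).powerset.filter (#· ≤ q) := fun T hT => by
    simp only [S, mem_filter, mem_powerset] at hT ⊢
    exact ⟨hT.1, card_le_of_subset_Icc_of_le_abs_sub (hnq ▸ hT.1)
      fun s hs t ht hst => (hT.2 s hs t ht hst).le⟩
  have hqn : q ≤ #(Icc 1 n) / 2 := by
    rw [Nat.card_Icc, Nat.add_sub_cancel]
    exact Nat.div_le_div_left hk two_pos
  calc ∑ T ∈ S, j ^ #T
      ≤ ∑ _T ∈ S, j ^ q := sum_le_sum fun T hT => Nat.pow_le_pow_right hj (mem_filter.mp (hS hT)).2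
    _ = #S * j ^ q := by rw [sum_const, smul_eq_mul]
    _ ≤ (q + 1) * n.choose q * j ^ q := by
        gcongr
        simpa using (card_le_card hS).trans ((Icc 1 n).card_filter_card_le_le hqn)
    _ ≤ j ^ q * (2 * q) * n.choose q := by
        rw [mul_comm, ← mul_assoc]
        gcongr
        omega
end
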